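/- Let 𝒞 be the collection of subsets C of the set ℰ of directed edges of the grid such that: (i) C is a disjoint union of pairs of distinct parallel directed edges; (ii) the underlying undirected multigraph of C is a union of edge-disjoint cycles; and (iii) no proper subset of C satisfies both (i) and (ii). Then 𝒞 is the set of circuits of a matroid on ℰ: 𝒞 does not contain the empty set, no member of 𝒞 properly contains another, and for distinct C_1, C_2 ∈ 𝒞 and e ∈ C_1 ∩ C_2 there exists C_3 ∈ 𝒞 with C_3 ⊆ (C_1 ∪ C_2) \ {e}. -/

import Mathlib

/-!
Both defining conditions are parity conditions. Parallelism is an equivalence relation, and a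
set carries a pairing into distinct parallel edges iff it meets every parallel class in an even
number of edges; condition (ii) asks for every vertex to have even degree. Hence the sets
satisfying (i) and (ii) are closed under symmetric difference, and `𝒞` consists of the minimal
nonempty ones among them. For distinct `C₁, C₂ ∈ 𝒞` and `e ∈ C₁ ∩ C₂`, the set `C₁ ∆ C₂` is
nonempty, satisfies (i) and (ii) and avoids `e`, so it contains a member of `𝒞`.
-/

/-- Vertices of the grid `{0,…,n₁} × ⋯ × {0,…,n_m}`. -/
abbrev GridV (m : ℕ) (n : Fin m → ℕ) := ∀ k : Fin m, Fin (n k + 1)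

/-- `u` and `v` are nearest neighbors in direction `k`, i.e. `u - v ∈ {±e_k}`. -/
abbrev gridAdjDir {m : ℕ} {n : Fin m → ℕ} (k : Fin m) (u v : GridV m n) : Prop :=
  (∀ l, l ≠ k → u l = v l) ∧ ((u k : ℕ) + 1 = (v k : ℕ) ∨ (v k : ℕ) + 1 = (u k : ℕ))

/-- Nearest-neighbor relation `u ∼ v` on the grid. -/
abbrev gridAdj {m : ℕ} {n : Fin m → ℕ} (u v : GridV m n) : Prop :=
  ∃ k, gridAdjDir k u v

/-- Directed edges of the grid: the ground set `ℰ`. -/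
abbrev DirEdge (m : ℕ) (n : Fin m → ℕ) := {p : GridV m n × GridV m n // gridAdj p.1 p.2}

/-- Two directed edges are parallel: both point in the same lattice direction `e_k`, with
the same orientation and the same height in that direction (i.e. one is obtained from the
other by a shift `w ∈ ∑_{ℓ≠k} ℤ e_ℓ`). -/
def parallelE {m : ℕ} {n : Fin m → ℕ} (e f : DirEdge m n) : Prop :=
  ∃ k, gridAdjDir k e.1.1 e.1.2 ∧ gridAdjDir k f.1.1 f.1.2 ∧
    f.1.1 k = e.1.1 k ∧ f.1.2 k = e.1.2 k

/-- Property (i): `C` is a disjoint union of pairs of distinct parallel directed edges,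
i.e. `C` carries a perfect matching into parallel pairs. -/
def pairedParallel {m : ℕ} {n : Fin m → ℕ} (C : Finset (DirEdge m n)) : Prop :=
  ∃ σ : DirEdge m n → DirEdge m n,
    ∀ e ∈ C, σ e ∈ C ∧ σ e ≠ e ∧ parallelE e (σ e) ∧ σ (σ e) = e

/-- Property (ii): the underlying undirected multigraph of `C` is a union of edge-disjoint
cycles; equivalently (Veblen), every vertex has even degree. -/
def cycleUnion {m : ℕ} {n : Fin m → ℕ} (C : Finset (DirEdge m n)) : Prop :=
  ∀ x : GridV m n,
    Even ((C.filter fun e => e.1.1 = x).card + (C.filter fun e => e.1.2 = x).card)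

/-- The collection `𝒞`: nonempty sets of directed edges satisfying (i) and (ii), no
nonempty proper subset of which satisfies both (i) and (ii). -/
def circuitSet (m : ℕ) (n : Fin m → ℕ) : Set (Finset (DirEdge m n)) :=
  {C | C.Nonempty ∧ pairedParallel C ∧ cycleUnion C ∧
    ∀ B ⊂ C, B.Nonempty → ¬(pairedParallel B ∧ cycleUnion B)}

open Finset
open scoped symmDiff

namespace Finset

variable {α β : Type*}

theorem card_symmDiff_add_two_mul_card_inter [DecidableEq α] (s t : Finset α) :
    #(s ∆ t) + 2 * #(s ∩ t) = #s + #t := by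
  rw [Finset.symmDiff_def, card_union_of_disjoint disjoint_sdiff_sdiff]
  have hst := card_sdiff_add_card_inter s t
  have hts := card_sdiff_add_card_inter t s
  rw [inter_comm t s] at hts
  omega

theorem filter_symmDiff [DecidableEq α] (p : α → Prop) [DecidablePred p] (s t : Finset α) :
    (s ∆ t).filter p = s.filter p ∆ t.filter p := by
  ext x
  simp only [mem_filter, mem_symmDiff]
  tauto

theorem even_card_of_involution (S : Finset α) (σ : α → α)
    (hσ : ∀ x ∈ S, σ x ∈ S ∧ σ x ≠ x ∧ σ (σ x) = x) : Even #S := by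
  -- the terms of `∑ x ∈ S, (1 : ZMod 2)` cancel in pairs `x, σ x`
  rw [← ZMod.natCast_eq_zero_iff_even, card_eq_sum_ones, Nat.cast_sum, Nat.cast_one]
  exact sum_involution (fun x _ => σ x) (fun _ _ => by decide) (fun x hx _ => (hσ x hx).2.1)
    (fun x hx => (hσ x hx).1) (fun x hx => (hσ x hx).2.2)

theorem exists_involution_of_even_card [DecidableEq α] (S : Finset α) (h : Even #S) :
    ∃ σ : α → α, ∀ x ∈ S, σ x ∈ S ∧ σ x ≠ x ∧ σ (σ x) = x := by
  obtain ⟨k, hk⟩ := h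
  let e : S ≃ Fin k ⊕ Fin k := (S.equivFinOfCardEq hk).trans finSumFinEquiv.symm
  let p : Equiv.Perm S := e.trans ((Equiv.sumComm _ _).trans e.symm)
  refine ⟨fun z => if hz : z ∈ S then p ⟨z, hz⟩ else z, fun x hx => ?_⟩
  have hpp : ∀ y, p (p y) = y := by simp [p]
  have hp : p ⟨x, hx⟩ ≠ ⟨x, hx⟩ := by
    simp only [p, Equiv.trans_apply, ne_eq, Equiv.symm_apply_eq]
    cases e ⟨x, hx⟩ <;> simp
  simpa [hx, hpp] using Subtype.ext_iff.not.mp hp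

theorem exists_fiberwise_involution_iff [DecidableEq α] [DecidableEq β] (C : Finset α)
    (κ : α → β) :
    (∃ σ : α → α, ∀ e ∈ C, σ e ∈ C ∧ σ e ≠ e ∧ κ e = κ (σ e) ∧ σ (σ e) = e) ↔
      ∀ b, Even #(C.filter (κ · = b)) := by
  constructor
  · rintro ⟨σ, hσ⟩ b
    refine even_card_of_involution _ σ fun x hx => ?_
    rw [mem_filter] at hx
    obtain ⟨hσC, hne, hκ, hσσ⟩ := hσ x hx.1
    exact ⟨mem_filter.2 ⟨hσC, hκ ▸ hx.2⟩, hne, hσσ⟩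
  · intro h
    choose τ hτ using fun b => exists_involution_of_even_card _ (h b)
    refine ⟨fun e => τ (κ e) e, fun e he => ?_⟩
    obtain ⟨hτC, hne, hττ⟩ := hτ (κ e) e (mem_filter.2 ⟨he, rfl⟩)
    have hκ : κ (τ (κ e) e) = κ e := (mem_filter.1 hτC).2
    exact ⟨(mem_filter.1 hτC).1, hne, hκ.symm, by simp only [hκ, hττ]⟩

theorem exists_minimal_nonempty_subset_union_sdiff [DecidableEq α] {P : Finset α → Prop}
    (hP : ∀ A B, P A → P B → P (A ∆ B)) {C₁ C₂ : Finset α} (h₁ : P C₁) (h₂ : P C₂)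
    (hne : C₁ ≠ C₂) {e : α} (he : e ∈ C₁ ∩ C₂) :
    ∃ C₃, Minimal (fun B => B.Nonempty ∧ P B) C₃ ∧ C₃ ⊆ (C₁ ∪ C₂) \ {e} := by
  obtain ⟨C₃, hle, hmin⟩ := exists_minimal_le_of_wellFoundedLT (fun B => B.Nonempty ∧ P B)
    (C₁ ∆ C₂) ⟨symmDiff_nonempty.2 hne, hP _ _ h₁ h₂⟩
  refine ⟨C₃, hmin, hle.trans fun x hx => ?_⟩
  simp only [mem_symmDiff, mem_inter] at hx he
  simp only [mem_sdiff, mem_union, mem_singleton]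
  grind

end Finset

section Parallel

variable {m : ℕ} {n : Fin m → ℕ}

theorem gridAdjDir_unique {k k' : Fin m} {u v : GridV m n}
    (h : gridAdjDir k u v) (h' : gridAdjDir k' u v) : k = k' := by
  by_contra hne
  have := congrArg Fin.val (h.1 k' (Ne.symm hne))
  omega

theorem parallelE_refl (e : DirEdge m n) : parallelE e e := by
  obtain ⟨k, hk⟩ := e.2
  exact ⟨k, hk, hk, rfl, rfl⟩

theorem parallelE_symm {e f : DirEdge m n} (h : parallelE e f) : parallelE f e := by
  obtain ⟨k, he, hf, h₁, h₂⟩ := h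
  exact ⟨k, hf, he, h₁.symm, h₂.symm⟩

theorem parallelE_trans {e f g : DirEdge m n} (h : parallelE e f) (h' : parallelE f g) :
    parallelE e g := by
  obtain ⟨k, he, hf, h₁, h₂⟩ := h
  obtain ⟨k', hf', hg, h₁', h₂'⟩ := h'
  obtain rfl : k = k' := gridAdjDir_unique hf hf'
  exact ⟨k, he, hg, h₁'.trans h₁, h₂'.trans h₂⟩

variable (m n) in
def parallelSetoid : Setoid (DirEdge m n) :=
  ⟨parallelE, ⟨parallelE_refl, parallelE_symm, parallelE_trans⟩⟩

open Classical in
theorem pairedParallel_iff_even_card_parallelClass (C : Finset (DirEdge m n)) :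
    pairedParallel C ↔
      ∀ q : Quotient (parallelSetoid m n), Even #(C.filter (fun e => ⟦e⟧ = q)) := by
  rw [pairedParallel, ← exists_fiberwise_involution_iff]
  simp only [Quotient.eq]
  rfl

theorem pairedParallel_symmDiff {A B : Finset (DirEdge m n)} (hA : pairedParallel A)
    (hB : pairedParallel B) : pairedParallel (A ∆ B) := by
  classical
  rw [pairedParallel_iff_even_card_parallelClass] at *
  intro q
  have h := card_symmDiff_add_two_mul_card_inter (A.filter (⟦·⟧ = q)) (B.filter (⟦·⟧ = q))
  rw [← filter_symmDiff] at h
  have hAq := hA q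
  have hBq := hB q
  simp only [Nat.even_iff] at hAq hBq ⊢
  omega

theorem cycleUnion_symmDiff {A B : Finset (DirEdge m n)} (hA : cycleUnion A)
    (hB : cycleUnion B) : cycleUnion (A ∆ B) := by
  intro x
  have hout := card_symmDiff_add_two_mul_card_inter (A.filter (·.1.1 = x)) (B.filter (·.1.1 = x))
  have hin := card_symmDiff_add_two_mul_card_inter (A.filter (·.1.2 = x)) (B.filter (·.1.2 = x))
  rw [← filter_symmDiff] at hout hin
  have hAx := hA x
  have hBx := hB x
  simp only [Nat.even_iff] at hAx hBx ⊢
  omega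

end Parallel

theorem mem_circuitSet_iff_minimal {m : ℕ} {n : Fin m → ℕ} {C : Finset (DirEdge m n)} :
    C ∈ circuitSet m n ↔
      Minimal (fun B => B.Nonempty ∧ (pairedParallel B ∧ cycleUnion B)) C := by
  simp only [circuitSet, Set.mem_ofPred_eq, minimal_iff_forall_lt]
  grind

/-- **Proposition 4.10.** `𝒞` satisfies the circuit axioms of a matroid on
the set of directed edges of the grid. -/
theorem circuitSet_is_matroid_circuits (m : ℕ) (n : Fin m → ℕ) :
    (∅ ∉ circuitSet m n) ∧
    (∀ C₁ ∈ circuitSet m n, ∀ C₂ ∈ circuitSet m n, C₁ ⊆ C₂ → C₁ = C₂) ∧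
    (∀ C₁ ∈ circuitSet m n, ∀ C₂ ∈ circuitSet m n, C₁ ≠ C₂ →
      ∀ e ∈ C₁ ∩ C₂, ∃ C₃ ∈ circuitSet m n, C₃ ⊆ (C₁ ∪ C₂) \ {e}) := by
  have hP : ∀ A B : Finset (DirEdge m n), pairedParallel A ∧ cycleUnion A →
      pairedParallel B ∧ cycleUnion B → pairedParallel (A ∆ B) ∧ cycleUnion (A ∆ B) :=
    fun A B hA hB => ⟨pairedParallel_symmDiff hA.1 hB.1, cycleUnion_symmDiff hA.2 hB.2⟩
  simp only [mem_circuitSet_iff_minimal]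
  exact ⟨fun h => not_nonempty_empty h.prop.1,
    fun C₁ h₁ C₂ h₂ hsub => h₂.eq_of_le h₁.prop hsub,
    fun C₁ h₁ C₂ h₂ hne e he =>
      exists_minimal_nonempty_subset_union_sdiff hP h₁.prop.2 h₂.prop.2 hne he⟩
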